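/- arXiv:2412.07869 — 4 statements merged into one kernel-verified Lean document; each statement's English description precedes it below -/
import Mathlib

section
/- For real numbers a, b with Re(a) > 0 and Re(b) > 0, the Fourier transform of the function x ↦ (1 - tanh²x)^a · e^{-iξx} integrates to a Beta function: ∫_{-∞}^{∞} e^{-iξx} (1 - tanh²x)^a dx = 2^{2a-1} B(a + iξ/2, a - iξ/2). -/
open MeasureTheory

/-- Pochhammer symbol (rising factorial) for a complex argument. -/
noncomputable def poch (z : ℂ) (k : ℕ) : ℂ := ∏ j ∈ Finset.range k, (z + j)

/-- Beta function for complex arguments with positive real parts. -/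
noncomputable def betaC (p q : ℂ) : ℂ :=
  Complex.Gamma p * Complex.Gamma q / Complex.Gamma (p + q)

/-- Terminating Gauss hypergeometric sum ₂F₁(-n, b; c; z). -/
noncomputable def F21 (n : ℕ) (b c z : ℂ) : ℂ :=
  ∑ j ∈ Finset.range (n + 1),
    poch (-(n : ℂ)) j * poch b j / (poch c j * (j.factorial : ℂ)) * z ^ j

/-- Terminating generalized hypergeometric sum ₃F₂(-n, b, c; d, e; 1). -/
noncomputable def F32 (n : ℕ) (b c d e : ℂ) : ℂ :=
  ∑ j ∈ Finset.range (n + 1),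
    poch (-(n : ℂ)) j * poch b j * poch c j /
      (poch d j * poch e j * (j.factorial : ℂ))

/-- Gegenbauer polynomial C_k^{(μ)}(x). -/
noncomputable def geg (k : ℕ) (μ x : ℂ) : ℂ :=
  poch (2 * μ) k / (k.factorial : ℂ) * F21 k ((k : ℂ) + 2 * μ) (μ + 1 / 2) ((1 - x) / 2)

/-- Laguerre polynomial L_n^{(α)}(u). -/
noncomputable def lag (n : ℕ) (α u : ℂ) : ℂ :=
  poch (α + 1) n / (n.factorial : ℂ) *
    ∑ j ∈ Finset.range (n + 1),
      poch (-(n : ℂ)) j / (poch (α + 1) j * (j.factorial : ℂ)) * u ^ j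

/-- Jacobi polynomial P_n^{(α,γ)}(t). -/
noncomputable def jac (n : ℕ) (α γ t : ℂ) : ℂ :=
  poch (α + 1) n / (n.factorial : ℂ) * F21 n ((n : ℂ) + α + γ + 1) (α + 1) ((1 - t) / 2)

/-- Continuous Hahn polynomial p_k(x; A, B, C, D). -/
noncomputable def hahn (k : ℕ) (x A B C D : ℂ) : ℂ :=
  Complex.I ^ k * poch (A + C) k * poch (A + D) k / (k.factorial : ℂ) *
    F32 k ((k : ℂ) + A + B + C + D - 1) (A + Complex.I * x) (A + C) (A + D)


noncomputable def phiT (t : ℝ) : ℝ := (Real.log t - Real.log (1 - t)) / 2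

lemma phiT_hasDeriv {t : ℝ} (ht : t ∈ Set.Ioo (0:ℝ) 1) :
    HasDerivAt phiT ((t⁻¹ + (1 - t)⁻¹) / 2) t := by
  obtain ⟨h0, h1⟩ := ht
  have h1t : (0:ℝ) < 1 - t := by linarith
  have H1 : HasDerivAt Real.log t⁻¹ t := Real.hasDerivAt_log (ne_of_gt h0)
  have H2 : HasDerivAt (fun t : ℝ => Real.log (1 - t)) (-(1 - t)⁻¹) t := by
    have hc : HasDerivAt (fun x : ℝ => 1 - x) (-1) t := (hasDerivAt_id t).const_sub 1
    have := (Real.hasDerivAt_log (ne_of_gt h1t)).comp t hc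
    exact this.congr_deriv (by ring)
  have := (H1.sub H2).div_const 2
  convert this using 1
  · rfl
  · rfl
  · rfl
  · ring

lemma phiT_strictMono : StrictMonoOn phiT (Set.Ioo (0:ℝ) 1) := by
  intro s hs t ht hst
  have h1 : Real.log s < Real.log t := Real.log_lt_log hs.1 hst
  have h2 : Real.log (1 - t) < Real.log (1 - s) :=
    Real.log_lt_log (by linarith [ht.2]) (by linarith)
  unfold phiT; linarith

lemma phiT_image : phiT '' (Set.Ioo (0:ℝ) 1) = Set.univ := by
  apply Set.eq_univ_of_forall
  intro x
  set E := Real.exp (-(2*x)) with hE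
  have hE0 : 0 < E := Real.exp_pos _
  have h1E : (0:ℝ) < 1 + E := by linarith
  refine ⟨(1+E)⁻¹, ⟨inv_pos.mpr h1E, ?_⟩, ?_⟩
  · rw [inv_lt_one_iff₀]; right; linarith
  · have h1t : 1 - (1+E)⁻¹ = E / (1+E) := by field_simp; ring
    unfold phiT
    rw [h1t, Real.log_inv, Real.log_div (ne_of_gt hE0) (ne_of_gt h1E), hE, Real.log_exp]
    ring

lemma tanh_phiT {t : ℝ} (ht : t ∈ Set.Ioo (0:ℝ) 1) : Real.tanh (phiT t) = 2*t - 1 := by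
  obtain ⟨h0, h1⟩ := ht
  have h1t : (0:ℝ) < 1 - t := by linarith
  set s := Real.exp (phiT t) with hs
  have hs0 : 0 < s := Real.exp_pos _
  have hs2 : s ^ 2 * (1 - t) = t := by
    have : s ^ 2 = Real.exp (Real.log t - Real.log (1 - t)) := by
      rw [hs, ← Real.exp_nat_mul]
      congr 1
      unfold phiT; ring
    rw [this, Real.exp_sub, Real.exp_log h0, Real.exp_log h1t]
    field_simp
  rw [Real.tanh_eq_sinh_div_cosh, Real.sinh_eq, Real.cosh_eq, Real.exp_neg, ← hs]
  have hden : s + s⁻¹ > 0 := by positivity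
  field_simp
  nlinarith [hs2, sq_nonneg s]

lemma cpow_pos_real {r : ℝ} (hr : 0 < r) (c : ℂ) :
    ((r : ℂ)) ^ c = Complex.exp (c * (Real.log r : ℂ)) := by
  rw [Complex.cpow_def_of_ne_zero (by exact_mod_cast hr.ne'), Complex.ofReal_log hr.le, mul_comm]

lemma key_pointwise (a : ℂ) (ξ : ℝ) {t : ℝ} (ht : t ∈ Set.Ioo (0:ℝ) 1) :
    |(t⁻¹ + (1 - t)⁻¹) / 2| •
      (Complex.exp (-(Complex.I * ξ * (phiT t : ℝ))) *
        ((1 - Real.tanh (phiT t) ^ 2 : ℝ) : ℂ) ^ a)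
    = (2:ℂ) ^ (2*a - 1) *
        ((t:ℂ) ^ (a - Complex.I * ξ / 2 - 1) * (1 - (t:ℂ)) ^ (a + Complex.I * ξ / 2 - 1)) := by
  obtain ⟨h0, h1⟩ := ht
  have h1t : (0:ℝ) < 1 - t := by linarith
  have habs : |(t⁻¹ + (1 - t)⁻¹) / 2| = (2 * t * (1 - t))⁻¹ := by
    rw [abs_of_pos (by positivity)]
    field_simp
    ring
  rw [habs, tanh_phiT ⟨h0, h1⟩]
  have h4 : (1 - (2*t - 1)^2 : ℝ) = 4 * (t * (1 - t)) := by ring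
  rw [h4]
  set Lt := Real.log t
  set Lu := Real.log (1 - t)
  set L2 := Real.log 2
  have hlog4 : Real.log (4 * (t * (1 - t))) = 2 * L2 + (Lt + Lu) := by
    rw [Real.log_mul (by norm_num) (by positivity), Real.log_mul h0.ne' h1t.ne']
    have : (4:ℝ) = 2 ^ 2 := by norm_num
    rw [this, Real.log_pow]
    push_cast; ring
  have e1 : ((4 * (t * (1 - t)) : ℝ) : ℂ) ^ a
      = Complex.exp (a * ((2 * L2 + (Lt + Lu) : ℝ) : ℂ)) := by
    rw [cpow_pos_real (by positivity), hlog4]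
  have e2 : ((t:ℂ)) ^ (a - Complex.I * ξ / 2 - 1)
      = Complex.exp ((a - Complex.I * ξ / 2 - 1) * (Lt : ℂ)) := cpow_pos_real h0 _
  have e3 : (1 - (t:ℂ)) ^ (a + Complex.I * ξ / 2 - 1)
      = Complex.exp ((a + Complex.I * ξ / 2 - 1) * (Lu : ℂ)) := by
    rw [show (1 - (t:ℂ)) = ((1 - t : ℝ) : ℂ) by push_cast; ring]
    exact cpow_pos_real h1t _
  have e4 : ((2:ℂ)) ^ (2*a - 1) = Complex.exp ((2*a - 1) * (L2 : ℂ)) := by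
    rw [show (2:ℂ) = ((2:ℝ):ℂ) by norm_num]
    exact cpow_pos_real (by norm_num) _
  have e5 : (((2 * t * (1 - t))⁻¹ : ℝ) : ℂ)
      = Complex.exp (-(((L2 : ℂ) + Lt + Lu))) := by
    have hb : ((2 * t * (1 - t) : ℝ) : ℂ) = Complex.exp ((L2 : ℂ) + Lt + Lu) := by
      rw [Complex.exp_add, Complex.exp_add, ← Complex.ofReal_exp, ← Complex.ofReal_exp,
        ← Complex.ofReal_exp, Real.exp_log (by norm_num : (0:ℝ) < 2), Real.exp_log h0,
        Real.exp_log h1t]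
      push_cast; ring
    rw [Complex.ofReal_inv, hb, ← Complex.exp_neg]
  rw [Complex.real_smul, e1, e5, e2, e3, e4,
    ← Complex.exp_add, ← Complex.exp_add, ← Complex.exp_add, ← Complex.exp_add]
  · congr 1
    rw [show ((phiT t : ℝ) : ℂ) = (((Lt : ℂ)) - Lu) / 2 by unfold phiT; push_cast; ring]
    push_cast
    ring

/-- Fourier transform of `(1 - tanh² x)^a`. -/
theorem fourier_transform_tanh_power (a : ℂ) (ha : 0 < a.re) (ξ : ℝ) :
    ∫ x : ℝ, Complex.exp (-(Complex.I * ξ * x)) * ((1 - Real.tanh x ^ 2 : ℝ) : ℂ) ^ a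
      = 2 ^ (2 * a - 1) * betaC (a + Complex.I * ξ / 2) (a - Complex.I * ξ / 2) := by
  set p : ℂ := a - Complex.I * ξ / 2 with hp
  set q : ℂ := a + Complex.I * ξ / 2 with hq
  have hcov := integral_image_eq_integral_abs_deriv_smul measurableSet_Ioo
    (fun t ht => (phiT_hasDeriv ht).hasDerivWithinAt) phiT_strictMono.injOn
    (fun x : ℝ => Complex.exp (-(Complex.I * ξ * x)) * ((1 - Real.tanh x ^ 2 : ℝ) : ℂ) ^ a)
  rw [phiT_image] at hcov
  rw [← setIntegral_univ, hcov]
  have hcongr : ∫ t in Set.Ioo (0:ℝ) 1,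
      |(t⁻¹ + (1 - t)⁻¹) / 2| •
        (Complex.exp (-(Complex.I * ξ * (phiT t : ℝ))) *
          ((1 - Real.tanh (phiT t) ^ 2 : ℝ) : ℂ) ^ a)
      = ∫ t in Set.Ioo (0:ℝ) 1,
          (2:ℂ) ^ (2*a - 1) * ((t:ℂ) ^ (p - 1) * (1 - (t:ℂ)) ^ (q - 1)) :=
    setIntegral_congr_fun measurableSet_Ioo (fun t ht => key_pointwise a ξ ht)
  rw [hcongr, integral_const_mul]
  have hbeta : ∫ t in Set.Ioo (0:ℝ) 1, (t:ℂ) ^ (p - 1) * (1 - (t:ℂ)) ^ (q - 1)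
      = Complex.betaIntegral p q := by
    rw [Complex.betaIntegral, intervalIntegral.integral_of_le zero_le_one,
      integral_Ioc_eq_integral_Ioo]
  rw [hbeta]
  have hpre : 0 < p.re := by rw [hp]; simpa using ha
  have hqre : 0 < q.re := by rw [hq]; simpa using ha
  have hΓ := Complex.Gamma_mul_Gamma_eq_betaIntegral hpre hqre
  have hpq : p + q = 2 * a := by rw [hp, hq]; ring
  have hΓne : Complex.Gamma (p + q) ≠ 0 := by
    apply Complex.Gamma_ne_zero
    intro m hcontra
    have h2a : (p + q).re = 2 * a.re := by rw [hpq]; simp [Complex.mul_re]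
    rw [hcontra] at h2a
    simp at h2a
    nlinarith [Nat.cast_nonneg (α := ℝ) m]
  rw [betaC]
  have hbi : Complex.betaIntegral p q
      = Complex.Gamma p * Complex.Gamma q / Complex.Gamma (p + q) := by
    field_simp at hΓ ⊢
    rw [hΓ]
  rw [hbi]
  have hqp : q + p = p + q := by ring
  rw [hqp]
  ring
end

section
/- For α > -1 and a complex number s with Re(s) > 0, the Mellin-type integral of the Laguerre polynomial satisfies ∫_0^∞ e^{-u/2} L_n^{α}(u) u^{s-1} du = ((α+1)_n / n!) · 2^s Γ(s) · ₂F₁(-n, s; α+1; 2). -/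
open MeasureTheory

/-! Expanding `L_n^α` into monomials, each term contributes a Gamma integral
`∫ e^{-u/2} u^{s+j-1} du = 2^{s+j} Γ(s+j) = 2^s Γ(s) (s)_j 2^j`,
and these assemble into the terminating `₂F₁(-n, s; α+1; 2)`. -/

open Set Finset

lemma poch_eq_ascPochhammer_eval (z : ℂ) (k : ℕ) : poch z k = (ascPochhammer ℂ k).eval z := by
  induction k with
  | zero => simp [poch]
  | succ k ih => rw [poch, prod_range_succ, ← poch, ih, ascPochhammer_succ_right]; simp

lemma Complex.Gamma_add_nat_eq_poch_mul {z : ℂ} (hz : ∀ k : ℕ, z ≠ -k) (j : ℕ) :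
    Complex.Gamma (z + j) = poch z j * Complex.Gamma z := by
  rw [poch_eq_ascPochhammer_eval, ← Complex.Gamma_add_nat_div_Gamma_eq z hz,
    div_mul_cancel₀ _ (Complex.Gamma_ne_zero hz)]

lemma Complex.integrableOn_cpow_mul_exp_neg_mul_Ioi {a : ℂ} {r : ℝ} (ha : 0 < a.re)
    (hr : 0 < r) :
    IntegrableOn (fun t : ℝ => (t : ℂ) ^ (a - 1) * Complex.exp (-(r * t))) (Ioi 0) := by
  refine Integrable.mono'
    (integrableOn_rpow_mul_exp_neg_mul_rpow (s := a.re - 1) (by linarith) one_pos hr)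
    ?_ ((ae_restrict_iff' measurableSet_Ioi).2 (ae_of_all _ fun t (ht : 0 < t) => ?_))
  · refine ContinuousOn.aestronglyMeasurable (fun t (ht : 0 < t) => ?_) measurableSet_Ioi
    exact ((Complex.continuousAt_ofReal_cpow_const _ _ (Or.inr ht.ne')).mul
      (by fun_prop)).continuousWithinAt
  · simp [Complex.norm_cpow_eq_rpow_re_of_pos ht, Complex.norm_exp]

theorem integral_exp_neg_mul_mul_sum_mul_cpow {r : ℝ} (hr : 0 < r) {s : ℂ} (hs : 0 < s.re)
    (N : ℕ) (a : ℕ → ℂ) :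
    ∫ u in Ioi (0 : ℝ),
        Complex.exp (-(r * u)) * (∑ j ∈ range N, a j * (u : ℂ) ^ j) * (u : ℂ) ^ (s - 1)
      = (1 / r : ℂ) ^ s * Complex.Gamma s *
          ∑ j ∈ range N, a j * poch s j * (1 / r : ℂ) ^ j := by
  have hs_re (j : ℕ) : 0 < (s + j).re := by simpa using add_pos_of_pos_of_nonneg hs j.cast_nonneg
  have hs_ne (k : ℕ) : s ≠ -k := by
    rintro rfl
    simp only [Complex.neg_re, Complex.natCast_re, Left.neg_pos_iff] at hs
    exact hs.not_ge k.cast_nonneg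
  have hexpand : ∀ u ∈ Ioi (0 : ℝ),
      Complex.exp (-(r * u)) * (∑ j ∈ range N, a j * (u : ℂ) ^ j) * (u : ℂ) ^ (s - 1)
        = ∑ j ∈ range N, a j * ((u : ℂ) ^ (s + j - 1) * Complex.exp (-(r * u))) := by
    intro u (hu : 0 < u)
    rw [mul_sum, sum_mul]
    refine sum_congr rfl fun j _ => ?_
    rw [add_sub_right_comm, Complex.cpow_add _ _ (by exact_mod_cast hu.ne'), Complex.cpow_natCast]
    ring
  rw [setIntegral_congr_fun measurableSet_Ioi hexpand, integral_finsetSum _ fun j _ =>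
    (Complex.integrableOn_cpow_mul_exp_neg_mul_Ioi (hs_re j) hr).const_mul _, mul_sum]
  refine sum_congr rfl fun j _ => ?_
  rw [integral_const_mul, Complex.integral_cpow_mul_exp_neg_mul_Ioi (hs_re j) hr,
    Complex.Gamma_add_nat_eq_poch_mul hs_ne, Complex.cpow_add _ _ (by simp [hr.ne']),
    Complex.cpow_natCast]
  ring

theorem laguerre_mellin_integral_general (α : ℝ) (s : ℂ) (hs : 0 < s.re) (n : ℕ) :
    ∫ u in Set.Ioi (0 : ℝ), Complex.exp (-(u / 2)) * lag n (α : ℂ) (u : ℂ) * (u : ℂ) ^ (s - 1)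
      = poch ((α : ℂ) + 1) n / (n.factorial : ℂ) * 2 ^ s * Complex.Gamma s *
          F21 n s ((α : ℂ) + 1) 2 := by
  have hexp (u : ℝ) : Complex.exp (-(u / 2)) = Complex.exp (-(((1 / 2 : ℝ) : ℂ) * u)) := by
    push_cast; ring_nf
  have hlag (u : ℂ) : lag n α u = ∑ j ∈ range (n + 1), poch (α + 1) n / n.factorial *
      (poch (-n) j / (poch (α + 1) j * j.factorial)) * u ^ j := by
    simp only [lag, mul_sum, mul_assoc]
  simp_rw [hexp, hlag]
  have htwo : (1 / ((1 / 2 : ℝ) : ℂ)) = 2 := by norm_num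
  rw [integral_exp_neg_mul_mul_sum_mul_cpow (by norm_num) hs, htwo, F21, mul_sum, mul_sum]
  refine sum_congr rfl fun j _ => ?_
  ring

/-- Mellin-type integral of the Laguerre polynomial. -/
theorem laguerre_mellin_integral (α : ℝ) (hα : -1 < α) (s : ℂ) (hs : 0 < s.re) (n : ℕ) :
    ∫ u in Set.Ioi (0 : ℝ), Complex.exp (-(u / 2)) * lag n (α : ℂ) (u : ℂ) * (u : ℂ) ^ (s - 1)
      = poch ((α : ℂ) + 1) n / (n.factorial : ℂ) * 2 ^ s * Complex.Gamma s *
          F21 n s ((α : ℂ) + 1) 2 :=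
  laguerre_mellin_integral_general α s hs n
end

section
/- For a, μ real with a > 0 and μ > -1/2, the Fourier transform of g(x) = (1 - tanh²x)^a C_k^{(μ)}(tanh x) is ∫_{-∞}^∞ e^{-iξx} g(x) dx = 2^{2a-1} ((2μ)_k / k!) B(a + iξ/2, a - iξ/2) · ₃F₂(-k, k+2μ, a+iξ/2; μ+1/2, 2a; 1). -/
open MeasureTheory

section Aux

open Set

noncomputable def logit (u : ℝ) : ℝ := Real.log u - Real.log (1 - u)

lemma logit_hasDeriv {u : ℝ} (hu : u ∈ Ioo (0:ℝ) 1) :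
    HasDerivAt logit (u⁻¹ + (1-u)⁻¹) u := by
  have h1 : HasDerivAt (fun v : ℝ => Real.log v) u⁻¹ u := Real.hasDerivAt_log (ne_of_gt hu.1)
  have h2 : HasDerivAt (fun v : ℝ => Real.log (1 - v)) ((1-u)⁻¹ * (-1)) u := by
    exact (Real.hasDerivAt_log (by nlinarith [hu.2] : (1:ℝ) - u ≠ 0)).comp u
      ((hasDerivAt_id u).const_sub 1)
  have := h1.sub h2
  exact this.congr_deriv (by ring)

lemma exp_logit {u : ℝ} (hu : u ∈ Ioo (0:ℝ) 1) : Real.exp (logit u) = u / (1 - u) := by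
  rw [logit, Real.exp_sub, Real.exp_log hu.1, Real.exp_log (by linarith [hu.2])]

lemma logit_injOn : InjOn logit (Ioo (0:ℝ) 1) := by
  intro u hu v hv h
  have := congrArg Real.exp h
  rw [exp_logit hu, exp_logit hv] at this
  have h1 : (1:ℝ) - u > 0 := by linarith [hu.2]
  have h2 : (1:ℝ) - v > 0 := by linarith [hv.2]
  field_simp at this
  nlinarith [this]

lemma logit_image : logit '' (Ioo (0:ℝ) 1) = univ := by
  apply eq_univ_of_forall
  intro x
  refine ⟨Real.exp x / (1 + Real.exp x), ⟨?_, ?_⟩, ?_⟩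
  · positivity
  · rw [div_lt_one (by positivity)]; linarith [Real.exp_pos x]
  · have hpos : (0:ℝ) < 1 + Real.exp x := by positivity
    have h1 : (1:ℝ) - Real.exp x / (1 + Real.exp x) = 1 / (1 + Real.exp x) := by
      field_simp
      ring
    rw [logit, h1]
    rw [div_eq_mul_inv, div_eq_mul_inv, one_mul, Real.log_mul (Real.exp_ne_zero x) (by positivity),
      Real.log_inv, Real.log_exp]
    ring

lemma cpow_real_eq {r : ℝ} (hr : 0 < r) (s : ℂ) :
    ((r:ℂ)) ^ s = Complex.exp ((Real.log r : ℝ) * s) := by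
  rw [Complex.cpow_def_of_ne_zero (by exact_mod_cast hr.ne' : (r:ℂ) ≠ 0), Complex.ofReal_log hr.le]

lemma key_pointwise_s6 (p q : ℂ) {u : ℝ} (hu : u ∈ Ioo (0:ℝ) 1) :
    ((|u⁻¹ + (1-u)⁻¹| : ℝ) : ℂ) * (Complex.exp (p * logit u) *
        ((1 + Real.exp (logit u) : ℝ) : ℂ) ^ (-(p+q)))
      = (u:ℂ) ^ (p-1) * (((1-u : ℝ)):ℂ) ^ (q-1) := by
  have h0 : (0:ℝ) < u := hu.1
  have h1 : (0:ℝ) < 1 - u := by linarith [hu.2]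
  have habs : |u⁻¹ + (1-u)⁻¹| = (u * (1-u))⁻¹ := by
    rw [abs_of_pos (by positivity)]; field_simp; ring
  have hbase : (1:ℝ) + Real.exp (logit u) = (1-u)⁻¹ := by
    rw [exp_logit hu]; field_simp; ring
  have hofReal : ((( (u * (1-u))⁻¹ : ℝ)) : ℂ) = Complex.exp ((Real.log ((u * (1-u))⁻¹) : ℝ) : ℂ) := by
    rw [← Complex.ofReal_exp, Real.exp_log (by positivity)]
  rw [habs, hbase, cpow_real_eq (by positivity), cpow_real_eq h0, cpow_real_eq h1, hofReal]
  rw [← Complex.exp_add, ← Complex.exp_add, ← Complex.exp_add]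
  congr 1
  rw [Real.log_inv, Real.log_inv, Real.log_mul h0.ne' h1.ne']
  unfold logit
  push_cast
  ring_nf

lemma beta_line_aux (p q : ℂ) :
    (∫ x : ℝ, Complex.exp (p * x) * ((1 + Real.exp x : ℝ) : ℂ) ^ (-(p+q)))
      = ∫ u in Ioo (0:ℝ) 1, (u:ℂ) ^ (p-1) * (((1-u:ℝ)):ℂ) ^ (q-1) := by
  have h := integral_image_eq_integral_abs_deriv_smul measurableSet_Ioo
    (f := logit) (f' := fun u => u⁻¹ + (1-u)⁻¹)
    (fun u hu => (logit_hasDeriv hu).hasDerivWithinAt) logit_injOn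
    (fun x => Complex.exp (p * x) * ((1 + Real.exp x : ℝ) : ℂ) ^ (-(p+q)))
  rw [logit_image] at h
  rw [← setIntegral_univ, h]
  exact setIntegral_congr_fun measurableSet_Ioo fun u hu => by
    simpa [Complex.real_smul] using key_pointwise_s6 p q hu

lemma beta_line_integrable (p q : ℂ) (hp : 0 < p.re) (hq : 0 < q.re) :
    Integrable (fun x : ℝ => Complex.exp (p * x) * ((1 + Real.exp x : ℝ) : ℂ) ^ (-(p+q))) := by
  rw [← integrableOn_univ, ← logit_image,
    integrableOn_image_iff_integrableOn_abs_deriv_smul measurableSet_Ioo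
      (fun u hu => (logit_hasDeriv hu).hasDerivWithinAt) logit_injOn]
  have h0 : IntegrableOn (fun u : ℝ => (u:ℂ) ^ (p-1) * ((1:ℂ) - u) ^ (q-1)) (Ioo 0 1) :=
    (Complex.betaIntegral_convergent hp hq).1.mono_set Ioo_subset_Ioc_self
  refine h0.congr_fun (fun u hu => ?_) measurableSet_Ioo
  have := (key_pointwise_s6 p q hu).symm
  simpa [Complex.real_smul] using this.trans (by push_cast; ring)

lemma betaC_eq_betaIntegral {p q : ℂ} (hp : 0 < p.re) (hq : 0 < q.re) :
    betaC p q = Complex.betaIntegral p q := by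
  have hne : Complex.Gamma (p + q) ≠ 0 :=
    Complex.Gamma_ne_zero_of_re_pos (by simpa [Complex.add_re] using add_pos hp hq)
  rw [betaC, Complex.Gamma_mul_Gamma_eq_betaIntegral hp hq]
  field_simp

lemma beta_line (p q : ℂ) (hp : 0 < p.re) (hq : 0 < q.re) :
    (∫ x : ℝ, Complex.exp (p * x) * ((1 + Real.exp x : ℝ) : ℂ) ^ (-(p+q))) = betaC p q := by
  rw [beta_line_aux, betaC_eq_betaIntegral hp hq, Complex.betaIntegral,
    intervalIntegral.integral_of_le zero_le_one, integral_Ioc_eq_integral_Ioo]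
  exact setIntegral_congr_fun measurableSet_Ioo fun u hu => by push_cast; ring

lemma poch_ne_zero {z : ℂ} (hz : 0 < z.re) (j : ℕ) : poch z j ≠ 0 := by
  refine Finset.prod_ne_zero_iff.mpr fun i _ => ?_
  intro h
  have h2 := congrArg Complex.re h
  simp only [Complex.add_re, Complex.natCast_re, Complex.zero_re] at h2
  have : (0:ℝ) ≤ (i:ℝ) := Nat.cast_nonneg i
  linarith

lemma Gamma_add_nat {z : ℂ} (hz : 0 < z.re) (j : ℕ) :
    Complex.Gamma (z + j) = Complex.Gamma z * poch z j := by
  induction j with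
  | zero => simp [poch]
  | succ n ih =>
    have hne : z + (n:ℂ) ≠ 0 := by
      intro h
      have h2 := congrArg Complex.re h
      simp only [Complex.add_re, Complex.natCast_re, Complex.zero_re] at h2
      have : (0:ℝ) ≤ (n:ℝ) := Nat.cast_nonneg n
      linarith
    have hstep : (z + ((n:ℕ)+1:ℕ)) = (z + n) + 1 := by push_cast; ring
    rw [hstep, Complex.Gamma_add_one _ hne, ih]
    rw [show poch z (n+1) = poch z n * (z + n) from Finset.prod_range_succ _ n]
    ring

lemma betaC_shift {p q : ℂ} (hp : 0 < p.re) (hq : 0 < q.re) (j : ℕ) :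
    betaC p (q + j) = betaC p q * poch q j / poch (p+q) j := by
  have hpq : 0 < (p+q).re := by simp only [Complex.add_re]; linarith
  have hΓ : Complex.Gamma (p+q) ≠ 0 := Complex.Gamma_ne_zero_of_re_pos hpq
  have hpo : poch (p+q) j ≠ 0 := poch_ne_zero hpq j
  have hΓj : Complex.Gamma ((p+q) + j) ≠ 0 := by
    rw [Gamma_add_nat hpq]; exact mul_ne_zero hΓ hpo
  rw [betaC, betaC, Gamma_add_nat hq j, show p + (q + (j:ℂ)) = (p+q) + j by ring,
    Gamma_add_nat hpq j]
  field_simp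

lemma betaC_comm (p q : ℂ) : betaC p q = betaC q p := by
  rw [betaC, betaC, add_comm, mul_comm]

lemma exp_two (x : ℝ) : Real.exp (2*x) = Real.exp x ^ 2 := by
  rw [two_mul, Real.exp_add]; ring

lemma tanh_sq (x : ℝ) :
    1 - Real.tanh x ^ 2 = 4 * Real.exp (2*x) / (1 + Real.exp (2*x))^2 := by
  rw [Real.tanh_eq_sinh_div_cosh, Real.sinh_eq, Real.cosh_eq, exp_two, Real.exp_neg]
  have h1 : Real.exp x ≠ 0 := Real.exp_ne_zero x
  have h4 : Real.exp x + (Real.exp x)⁻¹ ≠ 0 := by positivity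
  have h5 : 1 + Real.exp x ^ 2 ≠ 0 := by positivity
  field_simp
  ring

lemma one_sub_tanh (x : ℝ) : (1 - Real.tanh x)/2 = (1 + Real.exp (2*x))⁻¹ := by
  rw [Real.tanh_eq_sinh_div_cosh, Real.sinh_eq, Real.cosh_eq, Real.exp_neg]
  have h1 : Real.exp x ≠ 0 := Real.exp_ne_zero x
  have h4 : Real.exp x + (Real.exp x)⁻¹ ≠ 0 := by positivity
  have h5 : 1 + Real.exp (2*x) ≠ 0 := by positivity
  rw [exp_two] at h5 ⊢
  field_simp
  ring

lemma rpow_tanh (a x : ℝ) :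
    (1 - Real.tanh x ^ 2) ^ a
      = 4 ^ a * Real.exp (2*x*a) * (1 + Real.exp (2*x)) ^ (-(2*a)) := by
  have ht : (0:ℝ) < Real.exp (2*x) := Real.exp_pos _
  have h1t : (0:ℝ) < 1 + Real.exp (2*x) := by positivity
  rw [tanh_sq, Real.div_rpow (by positivity) (by positivity),
    Real.mul_rpow (by norm_num) ht.le, ← Real.exp_mul,
    ← Real.rpow_natCast (1 + Real.exp (2*x)) 2, ← Real.rpow_mul h1t.le,
    Real.rpow_neg h1t.le, div_eq_mul_inv]
  norm_num

lemma term_eq (a ξ : ℝ) (j : ℕ) (x : ℝ) :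
    Complex.exp (-(Complex.I * ξ * x)) * (((1 - Real.tanh x ^ 2) ^ a : ℝ) : ℂ) *
      ((1 - (Real.tanh x : ℂ))/2)^j
    = (((4:ℝ)^a : ℝ) : ℂ) * (Complex.exp (((a:ℂ) - Complex.I*ξ/2) * ((2*x : ℝ) : ℂ)) *
        ((1 + Real.exp (2*x) : ℝ) : ℂ) ^
          (-((((a:ℂ) - Complex.I*ξ/2)) + ((a:ℂ) + Complex.I*ξ/2 + j)))) := by
  have ht : (0:ℝ) < Real.exp (2*x) := Real.exp_pos _
  have h1t : (0:ℝ) < 1 + Real.exp (2*x) := by positivity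
  set C : ℂ := ((1 + Real.exp (2*x) : ℝ) : ℂ) with hC
  have hCne : C ≠ 0 := by rw [hC]; exact_mod_cast h1t.ne'
  have h5 : ((1 : ℂ) - (Real.tanh x : ℂ))/2 = C⁻¹ := by
    rw [hC]
    rw [show ((1:ℂ) - (Real.tanh x:ℂ))/2 = (((1 - Real.tanh x)/2 : ℝ) : ℂ) by push_cast; ring,
      one_sub_tanh]
    push_cast
    ring
  have h6 : (((1 - Real.tanh x ^ 2) ^ a : ℝ) : ℂ)
      = (((4:ℝ)^a : ℝ) : ℂ) * Complex.exp ((2*x*a : ℝ) : ℂ) * C ^ ((-(2*a) : ℝ) : ℂ) := by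
    rw [rpow_tanh, Complex.ofReal_mul, Complex.ofReal_mul, Complex.ofReal_exp,
      Complex.ofReal_cpow h1t.le]
  have hexpo : (-((((a:ℂ) - Complex.I*ξ/2)) + ((a:ℂ) + Complex.I*ξ/2 + j)))
      = ((-(2*a) : ℝ) : ℂ) + (-(j:ℂ)) := by push_cast; ring
  have hexp : Complex.exp (-(Complex.I * ξ * x)) * Complex.exp ((2*x*a : ℝ) : ℂ)
      = Complex.exp (((a:ℂ) - Complex.I*ξ/2) * ((2*x : ℝ) : ℂ)) := by
    rw [← Complex.exp_add]; congr 1; push_cast; ring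
  rw [h5, h6, hexpo, Complex.cpow_add _ _ hCne, Complex.cpow_neg, Complex.cpow_natCast,
    ← inv_pow, ← hexp]
  ring

lemma re_sub (a ξ : ℝ) : ((a:ℂ) - Complex.I*ξ/2).re = a := by
  simp [Complex.div_re]

lemma re_add (a ξ : ℝ) (j : ℕ) : ((a:ℂ) + Complex.I*ξ/2 + j).re = a + j := by
  simp [Complex.div_re]

lemma re_add0 (a ξ : ℝ) : ((a:ℂ) + Complex.I*ξ/2).re = a := by
  simp [Complex.div_re]

lemma integrable_term (a ξ : ℝ) (ha : 0 < a) (j : ℕ) :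
    Integrable (fun x : ℝ => Complex.exp (-(Complex.I * ξ * x)) *
      (((1 - Real.tanh x ^ 2) ^ a : ℝ) : ℂ) * ((1 - (Real.tanh x : ℂ))/2)^j) := by
  have hfun : (fun x : ℝ => Complex.exp (-(Complex.I * ξ * x)) *
      (((1 - Real.tanh x ^ 2) ^ a : ℝ) : ℂ) * ((1 - (Real.tanh x : ℂ))/2)^j)
      = fun x : ℝ => (((4:ℝ)^a : ℝ) : ℂ) *
        ((fun y : ℝ => Complex.exp (((a:ℂ) - Complex.I*ξ/2) * y) *
          ((1 + Real.exp y : ℝ) : ℂ) ^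
            (-((((a:ℂ) - Complex.I*ξ/2)) + ((a:ℂ) + Complex.I*ξ/2 + j)))) (2*x)) :=
    funext fun x => term_eq a ξ j x
  rw [hfun]
  have hP : 0 < ((a:ℂ) - Complex.I*ξ/2).re := by rw [re_sub]; exact ha
  have hQ : 0 < ((a:ℂ) + Complex.I*ξ/2 + j).re := by
    rw [re_add]; positivity
  exact ((beta_line_integrable _ _ hP hQ).comp_mul_left' two_ne_zero).const_mul _

lemma h4a (a : ℝ) : (((4:ℝ)^a : ℝ) : ℂ) = 2 * (2:ℂ) ^ (2*(a:ℂ)-1) := by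
  have h : (4:ℝ)^a = 2 * (2:ℝ)^(2*a-1) := by
    rw [show (4:ℝ) = 2^(2:ℕ) by norm_num, ← Real.rpow_natCast (2:ℝ) 2,
      ← Real.rpow_mul (by norm_num : (0:ℝ) ≤ 2), Real.rpow_sub two_pos, Real.rpow_one]
    push_cast
    ring
  rw [h, Complex.ofReal_mul, Complex.ofReal_cpow (by norm_num : (0:ℝ) ≤ 2)]
  norm_num

lemma integral_term (a ξ : ℝ) (ha : 0 < a) (j : ℕ) :
    (∫ x : ℝ, Complex.exp (-(Complex.I * ξ * x)) * (((1 - Real.tanh x ^ 2) ^ a : ℝ) : ℂ) *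
        ((1 - (Real.tanh x : ℂ))/2)^j)
      = 2 ^ (2*(a:ℂ)-1) * betaC ((a:ℂ) + Complex.I*ξ/2) ((a:ℂ) - Complex.I*ξ/2)
          * poch ((a:ℂ) + Complex.I*ξ/2) j / poch (2*(a:ℂ)) j := by
  have hP : 0 < ((a:ℂ) - Complex.I*ξ/2).re := by rw [re_sub]; exact ha
  have hQ0 : 0 < ((a:ℂ) + Complex.I*ξ/2).re := by rw [re_add0]; exact ha
  have hfun : ∀ x : ℝ, Complex.exp (-(Complex.I * ξ * x)) *
      (((1 - Real.tanh x ^ 2) ^ a : ℝ) : ℂ) * ((1 - (Real.tanh x : ℂ))/2)^j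
      = (((4:ℝ)^a : ℝ) : ℂ) *
        ((fun y : ℝ => Complex.exp (((a:ℂ) - Complex.I*ξ/2) * y) *
          ((1 + Real.exp y : ℝ) : ℂ) ^
            (-((((a:ℂ) - Complex.I*ξ/2)) + ((a:ℂ) + Complex.I*ξ/2 + j)))) (2*x)) :=
    fun x => term_eq a ξ j x
  simp only [hfun]
  rw [integral_const_mul, MeasureTheory.Measure.integral_comp_mul_left
    (fun y : ℝ => Complex.exp (((a:ℂ) - Complex.I*ξ/2) * y) *
      ((1 + Real.exp y : ℝ) : ℂ) ^
        (-((((a:ℂ) - Complex.I*ξ/2)) + ((a:ℂ) + Complex.I*ξ/2 + j)))) 2]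
  have hQj : 0 < ((a:ℂ) + Complex.I*ξ/2 + j).re := by rw [re_add]; positivity
  rw [beta_line _ _ hP hQj]
  rw [show ((a:ℂ) + Complex.I*ξ/2 + j) = ((a:ℂ) + Complex.I*ξ/2) + (j:ℂ) from rfl]
  rw [betaC_shift hP hQ0 j]
  rw [show ((a:ℂ) - Complex.I*ξ/2) + ((a:ℂ) + Complex.I*ξ/2) = 2*(a:ℂ) by ring]
  rw [betaC_comm, h4a]
  rw [show |(2:ℝ)⁻¹| = (2:ℝ)⁻¹ by norm_num, Complex.real_smul]
  push_cast
  ring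

end Aux

/-- Fourier transform of `(1 - tanh² x)^a C_k^{(μ)}(tanh x)`. -/
theorem fourier_transform_gegenbauer (a μ : ℝ) (ha : 0 < a) (hμ : -1/2 < μ) (k : ℕ) (ξ : ℝ) :
    ∫ x : ℝ, Complex.exp (-(Complex.I * ξ * x)) *
        (((1 - Real.tanh x ^ 2) ^ a : ℝ) : ℂ) * geg k (μ : ℂ) ((Real.tanh x : ℝ) : ℂ)
      = 2 ^ (2 * (a : ℂ) - 1) * (poch (2 * (μ : ℂ)) k / (k.factorial : ℂ)) *
          betaC ((a : ℂ) + Complex.I * ξ / 2) ((a : ℂ) - Complex.I * ξ / 2) *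
          F32 k ((k : ℂ) + 2 * μ) ((a : ℂ) + Complex.I * ξ / 2) ((μ : ℂ) + 1/2)
            (2 * (a : ℂ)) := by
  have hfun : ∀ x : ℝ,
      Complex.exp (-(Complex.I * ξ * x)) * (((1 - Real.tanh x ^ 2) ^ a : ℝ) : ℂ) *
        geg k (μ : ℂ) ((Real.tanh x : ℝ) : ℂ)
      = ∑ j ∈ Finset.range (k+1),
          (poch (2 * (μ:ℂ)) k / (k.factorial : ℂ) *
            (poch (-(k : ℂ)) j * poch ((k:ℂ) + 2*μ) j /
              (poch ((μ:ℂ) + 1/2) j * (j.factorial : ℂ)))) *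
          (Complex.exp (-(Complex.I * ξ * x)) * (((1 - Real.tanh x ^ 2) ^ a : ℝ) : ℂ) *
            ((1 - (Real.tanh x : ℂ))/2)^j) := by
    intro x
    rw [geg, F21, Finset.mul_sum, Finset.mul_sum]
    exact Finset.sum_congr rfl fun j _ => by ring
  simp only [hfun]
  rw [integral_finset_sum _ (fun j _ => (integrable_term a ξ ha j).const_mul _)]
  simp only [integral_const_mul, integral_term a ξ ha]
  rw [F32, Finset.mul_sum]
  exact Finset.sum_congr rfl fun j _ => by ring
end

section
/- The Laguerre polynomials on the cone are orthogonal: for μ > -1/2, β > -d, with L_{k,n}^{β,μ}(t,x) = L_{n-m}^{2m+2μ+β+d-1}(t) t^m P_k^m(x/t) (|k| = m ≤ n, P_k^m an orthogonal basis of V_m(B^d, w_μ)), one has ∫_{V^{d+1}} L_{k,n}^{β,μ}(t,x) L_{l,n'}^{β,μ}(t,x) (t²-‖x‖²)^{μ-1/2} t^β e^{-t} dx dt = 0 unless n = n' and k = l. -/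
open MeasureTheory

/-- Real Pochhammer symbol. -/
noncomputable def pochR (z : ℝ) (k : ℕ) : ℝ := ∏ j ∈ Finset.range k, (z + j)

/-- Real Laguerre polynomial `L_n^{(α)}(u)`. -/
noncomputable def lagR (n : ℕ) (α u : ℝ) : ℝ :=
  pochR (α + 1) n / n.factorial *
    ∑ j ∈ Finset.range (n + 1),
      pochR (-(n : ℝ)) j / (pochR (α + 1) j * j.factorial) * u ^ j

/-- The closed cone `V^{d+1}`. -/
def coneSet (d : ℕ) : Set (ℝ × EuclideanSpace ℝ (Fin d)) :=
  {p | ‖p.2‖ ≤ p.1 ∧ 0 ≤ p.1}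

open Set

section aux



lemma pochR_zero (z : ℝ) : pochR z 0 = 1 := by simp [pochR]

lemma pochR_succ (z : ℝ) (k : ℕ) : pochR z (k+1) = pochR z k * (z + k) := by
  simp [pochR, Finset.prod_range_succ]

lemma pochR_pos {z : ℝ} (hz : 0 < z) (k : ℕ) : 0 < pochR z k := by
  induction k with
  | zero => simp [pochR]
  | succ k ih => rw [pochR_succ]; positivity

lemma pochR_add (z : ℝ) (j k : ℕ) : pochR z (j + k) = pochR z j * pochR (z + j) k := by
  induction k with
  | zero => simp [pochR]
  | succ k ih =>
      rw [← Nat.add_assoc, pochR_succ, pochR_succ, ih]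
      push_cast; ring

lemma Gamma_pochR {z : ℝ} (hz : 0 < z) (k : ℕ) :
    Real.Gamma (z + k) = Real.Gamma z * pochR z k := by
  induction k with
  | zero => simp [pochR]
  | succ k ih =>
      have h1 : z + (k+1 : ℕ) = (z + k) + 1 := by push_cast; ring
      rw [h1, Real.Gamma_add_one (by positivity), ih, pochR_succ]; ring

lemma pochR_neg_nat (b k : ℕ) (hk : k ≤ b) :
    pochR (-(b:ℝ)) k = (-1)^k * (k.factorial : ℝ) * (b.choose k : ℝ) := by
  have h : pochR (-(b:ℝ)) k = (-1)^k * (b.descFactorial k : ℝ) := by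
    induction k with
    | zero => simp [pochR]
    | succ k ih =>
        have hk' : k ≤ b := Nat.le_of_succ_le hk
        rw [pochR_succ, ih hk', Nat.descFactorial_succ]
        have : ((b - k : ℕ) : ℝ) = (b : ℝ) - k := by
          have := Nat.lt_of_succ_le hk
          push_cast [Nat.cast_sub hk'] ; ring
        push_cast [this]
        ring
  rw [h, Nat.descFactorial_eq_factorial_mul_choose]
  push_cast; ring

open Polynomial

lemma findiff_step (b : ℕ) (f : ℕ → ℝ) :
    ∑ k ∈ Finset.range (b+2), (-1:ℝ)^k * ((b+1).choose k : ℝ) * f k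
      = ∑ k ∈ Finset.range (b+1), (-1:ℝ)^k * (b.choose k : ℝ) * (f k - f (k+1)) := by
  rw [Finset.sum_range_succ']
  have h1 : ∀ k, ((b+1).choose (k+1) : ℝ) = (b.choose k : ℝ) + (b.choose (k+1) : ℝ) := by
    intro k; rw [Nat.choose_succ_succ]; push_cast; ring
  simp only [h1]
  have h2 : ∑ k ∈ Finset.range (b+1), (-1:ℝ)^k * (b.choose k : ℝ) * (f k - f (k+1))
      = ∑ k ∈ Finset.range (b+1), (-1:ℝ)^k * (b.choose k : ℝ) * f k
        - ∑ k ∈ Finset.range (b+1), (-1:ℝ)^k * (b.choose k : ℝ) * f (k+1) := by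
    rw [← Finset.sum_sub_distrib]; congr 1; funext k; ring
  rw [h2]
  have h3 : ∑ k ∈ Finset.range (b+1), (-1:ℝ)^k * (b.choose k : ℝ) * f k
      = (-1:ℝ)^0 * (b.choose 0 : ℝ) * f 0
        + ∑ k ∈ Finset.range b, (-1:ℝ)^(k+1) * (b.choose (k+1) : ℝ) * f (k+1) := by
    rw [Finset.sum_range_succ']; ring
  rw [h3]
  have h4 : ∑ k ∈ Finset.range (b+1), (-1:ℝ)^(k+1) * ((b.choose k : ℝ) + (b.choose (k+1) : ℝ)) * f (k+1)
      = ∑ k ∈ Finset.range (b+1), ((-1:ℝ)^(k+1) * (b.choose k : ℝ) * f (k+1)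
          + (-1:ℝ)^(k+1) * (b.choose (k+1) : ℝ) * f (k+1)) := by
    congr 1; funext k; ring
  rw [h4, Finset.sum_add_distrib]
  have h5 : ∑ k ∈ Finset.range (b+1), (-1:ℝ)^(k+1) * (b.choose (k+1) : ℝ) * f (k+1)
      = ∑ k ∈ Finset.range b, (-1:ℝ)^(k+1) * (b.choose (k+1) : ℝ) * f (k+1) := by
    rw [Finset.sum_range_succ, Nat.choose_succ_self]; simp
  rw [h5]
  have h6 : ∑ k ∈ Finset.range (b+1), (-1:ℝ)^(k+1) * (b.choose k : ℝ) * f (k+1)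
      = - ∑ k ∈ Finset.range (b+1), (-1:ℝ)^k * (b.choose k : ℝ) * f (k+1) := by
    rw [← Finset.sum_neg_distrib]; congr 1; funext k; ring
  rw [h6]; simp; ring

lemma deg_diff_lt {p : Polynomial ℝ} {b : ℕ} (hp : p.degree < (b:ℕ) + 1) :
    (p - p.comp (X + C 1)).degree < (b : ℕ) := by
  by_cases hp0 : p = 0
  · simp [hp0]
  by_cases hc : p.natDegree = 0
  · obtain ⟨c, rfl⟩ := Polynomial.natDegree_eq_zero.mp hc
    simp
  · have hX : (X + C (1:ℝ)).natDegree = 1 := by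
      simpa using Polynomial.natDegree_X_add_C (1:ℝ)
    have hcomp_nd : (p.comp (X + C 1)).natDegree = p.natDegree := by
      rw [Polynomial.natDegree_comp, hX, mul_one]
    have hlc : (p.comp (X + C 1)).leadingCoeff = p.leadingCoeff := by
      rw [Polynomial.leadingCoeff_comp (by rw [hX]; exact one_ne_zero)]
      have : (X + C (1:ℝ)).leadingCoeff = 1 := Polynomial.monic_X_add_C 1
      rw [this]; simp
    have hcomp0 : p.comp (X + C 1) ≠ 0 := by
      intro h
      apply hp0
      rw [h] at hlc
      simp only [Polynomial.leadingCoeff_zero] at hlc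
      exact Polynomial.leadingCoeff_eq_zero.mp hlc.symm
    have hdeg : p.degree = (p.comp (X + C 1)).degree := by
      rw [Polynomial.degree_eq_natDegree hp0, Polynomial.degree_eq_natDegree hcomp0, hcomp_nd]
    have hlt := Polynomial.degree_sub_lt hdeg hp0 hlc.symm
    have hle : p.degree ≤ (b : ℕ) := by
      rw [Polynomial.degree_eq_natDegree hp0] at hp ⊢
      exact_mod_cast Nat.lt_succ_iff.mp (by exact_mod_cast hp)
    exact lt_of_lt_of_le hlt hle


lemma findiff (b : ℕ) : ∀ p : Polynomial ℝ, p.degree < (b : ℕ) →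
    ∑ k ∈ Finset.range (b+1), (-1:ℝ)^k * (b.choose k : ℝ) * p.eval (k:ℝ) = 0 := by
  induction b with
  | zero =>
      intro p hp
      have hp0 : p = 0 := Polynomial.degree_eq_bot.mp (Nat.WithBot.lt_zero_iff.mp (by exact_mod_cast hp))
      simp [hp0]
  | succ b ih =>
      intro p hp
      have : ((b:ℕ) + 1 : WithBot ℕ) = ((b+1 : ℕ) : WithBot ℕ) := by push_cast; rfl
      rw [findiff_step b (fun k => p.eval (k:ℝ))]
      have key : ∀ k : ℕ, p.eval (k:ℝ) - p.eval (((k:ℝ)+1))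
          = (p - p.comp (X + C 1)).eval (k:ℝ) := by
        intro k; simp [Polynomial.eval_comp]
      have : ∑ k ∈ Finset.range (b+1), (-1:ℝ)^k * (b.choose k : ℝ)
            * ((fun k : ℕ => p.eval (k:ℝ)) k - (fun k : ℕ => p.eval (k:ℝ)) (k+1))
          = ∑ k ∈ Finset.range (b+1), (-1:ℝ)^k * (b.choose k : ℝ)
            * (p - p.comp (X + C 1)).eval (k:ℝ) := by
        apply Finset.sum_congr rfl; intro k _
        simp only []
        rw [← key k]; push_cast; ring
      rw [this]
      exact ih _ (deg_diff_lt (by exact_mod_cast hp))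


lemma integrable_rpow_exp {c : ℝ} (hc : -1 < c) :
    IntegrableOn (fun t : ℝ => t ^ c * Real.exp (-t)) (Ioi 0) := by
  have h := Real.GammaIntegral_convergent (show (0:ℝ) < c + 1 by linarith)
  simpa [mul_comm, add_sub_cancel_right] using h

lemma integral_rpow_exp {c : ℝ} (hc : -1 < c) :
    ∫ t in Ioi (0:ℝ), t ^ c * Real.exp (-t) = Real.Gamma (c+1) := by
  rw [Real.Gamma_eq_integral (show (0:ℝ) < c + 1 by linarith)]
  simp only [add_sub_cancel_right]
  congr 1; funext t; ring

/-- rewrite `lagR · t^c · e^{-t}` as an explicit finite sum, valid for `t > 0`. -/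
lemma lag_weight_eq (n : ℕ) (α c : ℝ) {t : ℝ} (ht : 0 < t) :
    lagR n α t * t ^ c * Real.exp (-t)
      = ∑ k ∈ Finset.range (n+1),
          (pochR (α+1) n / n.factorial *
            (pochR (-(n:ℝ)) k / (pochR (α + 1) k * k.factorial)))
          * (t ^ ((k:ℝ) + c) * Real.exp (-t)) := by
  rw [lagR]
  simp only [Finset.mul_sum, Finset.sum_mul]
  apply Finset.sum_congr rfl
  intro k _
  have : t ^ ((k:ℝ) + c) = t ^ k * t ^ c := by
    rw [Real.rpow_add ht, Real.rpow_natCast]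
  rw [this]; ring

lemma lag_weight_integrable (n : ℕ) {α c : ℝ} (hc : -1 < c) :
    IntegrableOn (fun t => lagR n α t * t ^ c * Real.exp (-t)) (Ioi (0:ℝ)) := by
  have h : IntegrableOn (fun t : ℝ => ∑ k ∈ Finset.range (n+1),
      (pochR (α+1) n / n.factorial *
        (pochR (-(n:ℝ)) k / (pochR (α + 1) k * k.factorial)))
      * (t ^ ((k:ℝ) + c) * Real.exp (-t))) (Ioi (0:ℝ)) := by
    apply integrable_finset_sum
    intro k _
    exact ((integrable_rpow_exp (by push_cast; linarith : (-1:ℝ) < (k:ℝ) + c)).const_mul _)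
  exact h.congr_fun (fun t ht => (lag_weight_eq n α c ht).symm) measurableSet_Ioi

lemma lag_weight_integral (n : ℕ) {α c : ℝ} (hc : -1 < c) :
    ∫ t in Ioi (0:ℝ), lagR n α t * t ^ c * Real.exp (-t)
      = ∑ k ∈ Finset.range (n+1),
          (pochR (α+1) n / n.factorial *
            (pochR (-(n:ℝ)) k / (pochR (α + 1) k * k.factorial)))
          * Real.Gamma ((k:ℝ) + c + 1) := by
  rw [setIntegral_congr_fun measurableSet_Ioi
    (fun t (ht : t ∈ Ioi (0:ℝ)) => lag_weight_eq n α c ht)]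
  have hint : ∀ k ∈ Finset.range (n+1), Integrable (fun t : ℝ =>
      (pochR (α+1) n / n.factorial *
        (pochR (-(n:ℝ)) k / (pochR (α + 1) k * k.factorial)))
      * (t ^ ((k:ℝ) + c) * Real.exp (-t))) (volume.restrict (Ioi 0)) := fun k _ =>
    ((integrable_rpow_exp (by push_cast; linarith : (-1:ℝ) < (k:ℝ) + c)).const_mul _)
  rw [integral_finset_sum _ hint]
  apply Finset.sum_congr rfl
  intro k _
  rw [integral_const_mul, integral_rpow_exp (by push_cast; linarith : (-1:ℝ) < (k:ℝ) + c)]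


lemma lag_moment {α : ℝ} (hα : -1 < α) {b j : ℕ} (hj : j < b) :
    ∫ t in Ioi (0:ℝ), lagR b α t * t ^ (α + (j:ℝ)) * Real.exp (-t) = 0 := by
  have hz : (0:ℝ) < α + 1 := by linarith
  rw [lag_weight_integral b (by linarith : (-1:ℝ) < α + (j:ℝ))]
  have hG : ∀ k : ℕ, Real.Gamma ((k:ℝ) + (α + (j:ℝ)) + 1)
      = Real.Gamma (α+1) * pochR (α+1) k * pochR (α+1+(k:ℝ)) j := by
    intro k
    have h1 : (k:ℝ) + (α + (j:ℝ)) + 1 = (α+1) + ((k + j : ℕ) : ℝ) := by push_cast; ring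
    rw [h1, Gamma_pochR hz, pochR_add]
    push_cast; ring
  have hsum : ∑ k ∈ Finset.range (b+1),
      (pochR (α+1) b / b.factorial *
        (pochR (-(b:ℝ)) k / (pochR (α + 1) k * k.factorial)))
      * Real.Gamma ((k:ℝ) + (α + (j:ℝ)) + 1)
      = (pochR (α+1) b / b.factorial) * Real.Gamma (α+1) *
        ∑ k ∈ Finset.range (b+1), (-1:ℝ)^k * (b.choose k : ℝ) * pochR (α+1+(k:ℝ)) j := by
    rw [Finset.mul_sum]
    apply Finset.sum_congr rfl
    intro k hk
    rw [hG k, pochR_neg_nat b k (Nat.lt_succ_iff.mp (Finset.mem_range.mp hk))]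
    have hpk := pochR_pos hz k
    have hfk : (k.factorial : ℝ) ≠ 0 := by positivity
    field_simp
  rw [hsum]
  -- now the finite-difference identity kills the sum
  set p : Polynomial ℝ := ∏ i ∈ Finset.range j, (Polynomial.X + Polynomial.C (α+1+(i:ℝ))) with hp
  have hev : ∀ k : ℕ, p.eval (k:ℝ) = pochR (α+1+(k:ℝ)) j := by
    intro k
    rw [hp, Polynomial.eval_prod, pochR]
    apply Finset.prod_congr rfl
    intro i _
    simp only [Polynomial.eval_add, Polynomial.eval_X, Polynomial.eval_C]
    ring
  have hdeg : p.degree < (b : ℕ) := by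
    have hdj : p.degree = (j : ℕ) := by
      rw [hp, Polynomial.degree_prod]
      have h1 : ∑ i ∈ Finset.range j, (Polynomial.X + Polynomial.C (α+1+(i:ℝ))).degree
          = ∑ _i ∈ Finset.range j, (1 : WithBot ℕ) :=
        Finset.sum_congr rfl (fun i _ => Polynomial.degree_X_add_C (α+1+(i:ℝ)))
      rw [h1, Finset.sum_const, Finset.card_range]
      simp [nsmul_eq_mul]
    rw [hdj]; exact_mod_cast hj
  have hfd := findiff b p hdeg
  have hzero : ∑ k ∈ Finset.range (b+1), (-1:ℝ)^k * (b.choose k : ℝ) * pochR (α+1+(k:ℝ)) j = 0 := by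
    rw [← hfd]
    apply Finset.sum_congr rfl
    intro k _
    rw [hev k]
  rw [hzero, mul_zero]

lemma lag_orth {α : ℝ} (hα : -1 < α) {a b : ℕ} (hab : a < b) :
    ∫ t in Ioi (0:ℝ), lagR a α t * lagR b α t * t ^ α * Real.exp (-t) = 0 := by
  have key : ∀ t ∈ Ioi (0:ℝ), lagR a α t * lagR b α t * t ^ α * Real.exp (-t)
      = ∑ j ∈ Finset.range (a+1),
          (pochR (α+1) a / a.factorial *
            (pochR (-(a:ℝ)) j / (pochR (α + 1) j * j.factorial)))
          * (lagR b α t * t ^ (α + (j:ℝ)) * Real.exp (-t)) := by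
    intro t ht
    have ht : (0:ℝ) < t := ht
    rw [lagR]
    simp only [Finset.mul_sum, Finset.sum_mul]
    apply Finset.sum_congr rfl
    intro k _
    have : t ^ (α + (k:ℝ)) = t ^ α * t ^ k := by
      rw [Real.rpow_add ht, Real.rpow_natCast]
    rw [this]; ring
  rw [setIntegral_congr_fun measurableSet_Ioi key]
  have hint : ∀ j ∈ Finset.range (a+1), Integrable (fun t : ℝ =>
      (pochR (α+1) a / a.factorial *
        (pochR (-(a:ℝ)) j / (pochR (α + 1) j * j.factorial)))
      * (lagR b α t * t ^ (α + (j:ℝ)) * Real.exp (-t))) (volume.restrict (Ioi 0)) := fun j _ =>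
    ((lag_weight_integrable b (by linarith : (-1:ℝ) < α + (j:ℝ))).const_mul _)
  rw [integral_finset_sum _ hint]
  apply Finset.sum_eq_zero
  intro j hj
  have hjb : j < b := lt_of_le_of_lt (Nat.lt_succ_iff.mp (Finset.mem_range.mp hj)) hab
  rw [integral_const_mul, lag_moment hα hjb, mul_zero]

lemma lagR_of_poch_zero {n : ℕ} {α : ℝ} (h : pochR (α+1) n = 0) (u : ℝ) : lagR n α u = 0 := by
  simp [lagR, h]

lemma lagR_zero_eval (n : ℕ) (α : ℝ) : lagR n α 0 = pochR (α+1) n / n.factorial := by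
  rw [lagR, Finset.sum_eq_single 0]
  · simp [pochR]
  · intro j _ hj
    simp [zero_pow hj]
  · intro h; simp at h

lemma continuous_lagR (n : ℕ) (α : ℝ) : Continuous (fun u => lagR n α u) := by
  unfold lagR
  apply Continuous.mul continuous_const
  apply continuous_finset_sum
  intro j _
  exact continuous_const.mul (continuous_pow j)

lemma pochR_zero_left {k : ℕ} (hk : 0 < k) : pochR 0 k = 0 := by
  rw [pochR]
  exact Finset.prod_eq_zero (Finset.mem_range.mpr hk) (by simp)

lemma not_integrable_case {α : ℝ} (hα : α < -1) {a b : ℕ}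
    (ha : pochR (α+1) a ≠ 0) (hb : pochR (α+1) b ≠ 0) :
    ¬ IntegrableOn (fun t => lagR a α t * lagR b α t * t ^ α * Real.exp (-t)) (Ioi (0:ℝ)) := by
  intro hint
  set g : ℝ → ℝ := fun t => lagR a α t * lagR b α t * Real.exp (-t) with hg
  have hgc : Continuous g := by
    apply (((continuous_lagR a α).mul (continuous_lagR b α)).mul (Real.continuous_exp.comp continuous_neg))
  have hg0 : g 0 ≠ 0 := by
    have : g 0 = (pochR (α+1) a / a.factorial) * (pochR (α+1) b / b.factorial) * 1 := by
      simp [hg, lagR_zero_eval]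
    rw [this]
    have hfa : (a.factorial : ℝ) ≠ 0 := by positivity
    have hfb : (b.factorial : ℝ) ≠ 0 := by positivity
    simp [ha, hb, hfa, hfb]
  set c := |g 0| with hc
  have hcpos : 0 < c := abs_pos.mpr hg0
  -- choose δ with |g t| ≥ c/2 on [0, δ)
  obtain ⟨δ, hδpos, hδ⟩ := Metric.continuous_iff.mp hgc 0 (c/2) (by linarith)
  have hbound : ∀ t ∈ Ioo (0:ℝ) δ, c/2 ≤ |g t| := by
    intro t ht
    have hd : dist t 0 < δ := by
      rw [Real.dist_eq, sub_zero, abs_of_pos ht.1]; exact ht.2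
    have := hδ t hd
    rw [Real.dist_eq] at this
    have h1 : |g 0| - |g t| ≤ |g t - g 0| := by
      have := abs_sub_abs_le_abs_sub (g 0) (g t)
      rwa [abs_sub_comm] at this
    rw [← hc] at *
    linarith [abs_sub_abs_le_abs_sub (g 0) (g t), abs_sub_comm (g t) (g 0) ▸ this]
  -- t^α is then integrable on Ioo 0 δ, contradiction
  have hioo : IntegrableOn (fun t => lagR a α t * lagR b α t * t ^ α * Real.exp (-t)) (Ioo 0 δ) :=
    hint.mono_set Ioo_subset_Ioi_self
  have hrint : IntegrableOn (fun t : ℝ => t ^ α) (Ioo (0:ℝ) δ) := by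
    refine MeasureTheory.Integrable.mono
      (g := fun t : ℝ => 2/c * (lagR a α t * lagR b α t * t ^ α * Real.exp (-t)))
      (hioo.const_mul (2/c)) ?_ ?_
    · exact ((measurable_id.pow_const α).aestronglyMeasurable)
    · rw [ae_restrict_iff' measurableSet_Ioo]
      filter_upwards with t
      intro ht
      have htpos : 0 < t := ht.1
      have hrp : (0:ℝ) < t ^ α := Real.rpow_pos_of_pos htpos α
      have habs : |2/c * (lagR a α t * lagR b α t * t ^ α * Real.exp (-t))|
          = 2/c * |g t| * t ^ α := by
        rw [abs_mul, abs_of_pos (by positivity : (0:ℝ) < 2/c)]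
        rw [show lagR a α t * lagR b α t * t ^ α * Real.exp (-t)
            = (lagR a α t * lagR b α t * Real.exp (-t)) * t ^ α by ring]
        rw [abs_mul, abs_of_pos hrp]
        have hgt : g t = lagR a α t * lagR b α t * Real.exp (-t) := rfl
        rw [hgt]; ring
      rw [Real.norm_eq_abs, Real.norm_eq_abs, habs, abs_of_pos hrp]
      have hb2 := hbound t ht
      have h1 : (1:ℝ) ≤ 2/c * |g t| := by
        rw [div_mul_eq_mul_div, le_div_iff₀ hcpos]; linarith
      nlinarith [mul_le_mul_of_nonneg_right h1 hrp.le]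
  rw [intervalIntegral.integrableOn_Ioo_rpow_iff hδpos] at hrint
  linarith

lemma lag_orth_full {α : ℝ} (hα : -2 < α) {a b : ℕ} (hab : a ≠ b) :
    ∫ t in Ioi (0:ℝ), lagR a α t * lagR b α t * t ^ α * Real.exp (-t) = 0 := by
  by_cases ha : pochR (α+1) a = 0
  · simp [lagR_of_poch_zero ha]
  by_cases hb : pochR (α+1) b = 0
  · simp [lagR_of_poch_zero hb]
  rcases lt_trichotomy α (-1) with h1 | h1 | h1
  · exact integral_undef (not_integrable_case h1 ha hb)
  · -- α = -1 : impossible, one of the pochs vanishes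
    exfalso
    rcases Nat.lt_or_ge 0 a with ha0 | ha0
    · exact ha (by rw [h1]; simpa using pochR_zero_left ha0)
    · have hb0 : 0 < b := by omega
      exact hb (by rw [h1]; simpa using pochR_zero_left hb0)
  · rcases lt_or_gt_of_ne hab with h | h
    · exact lag_orth h1 h
    · rw [setIntegral_congr_fun measurableSet_Ioi
        (fun t _ => by ring : ∀ t ∈ Ioi (0:ℝ), lagR a α t * lagR b α t * t ^ α * Real.exp (-t)
          = lagR b α t * lagR a α t * t ^ α * Real.exp (-t))]
      exact lag_orth h1 h


variable {d : ℕ}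

noncomputable def DPhi (d : ℕ) (p : ℝ × EuclideanSpace ℝ (Fin d)) :
    (ℝ × EuclideanSpace ℝ (Fin d)) →L[ℝ] (ℝ × EuclideanSpace ℝ (Fin d)) :=
  (ContinuousLinearMap.fst ℝ ℝ (EuclideanSpace ℝ (Fin d))).prod
    (p.1 • ContinuousLinearMap.snd ℝ ℝ (EuclideanSpace ℝ (Fin d))
      + (ContinuousLinearMap.fst ℝ ℝ (EuclideanSpace ℝ (Fin d))).smulRight p.2)

lemma hasFDerivAt_Phi (p : ℝ × EuclideanSpace ℝ (Fin d)) :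
    HasFDerivAt (fun q : ℝ × EuclideanSpace ℝ (Fin d) => (q.1, q.1 • q.2)) (DPhi d p) p := by
  apply HasFDerivAt.prodMk
  · exact hasFDerivAt_fst
  · exact (hasFDerivAt_fst (p := p)).fun_smul (hasFDerivAt_snd (p := p))

lemma det_DPhi (p : ℝ × EuclideanSpace ℝ (Fin d)) : (DPhi d p).det = p.1 ^ d := by
  have hdet : (DPhi d p).det = LinearMap.det ((DPhi d p) : (ℝ × EuclideanSpace ℝ (Fin d)) →ₗ[ℝ] _) := rfl
  rw [hdet]
  set b1 : Module.Basis Unit ℝ ℝ := Module.Basis.singleton Unit ℝ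
  set b2 : Module.Basis (Fin d) ℝ (EuclideanSpace ℝ (Fin d)) := PiLp.basisFun 2 ℝ (Fin d)
  set b := b1.prod b2
  rw [← LinearMap.det_toMatrix b]
  have hM : (LinearMap.toMatrix b b ((DPhi d p) : (ℝ × EuclideanSpace ℝ (Fin d)) →ₗ[ℝ] _))
      = Matrix.fromBlocks 1 (0 : Matrix Unit (Fin d) ℝ)
          (Matrix.of fun i _ => p.2 i) (p.1 • (1 : Matrix (Fin d) (Fin d) ℝ)) := by
    have hval_inl : (DPhi d p) (b (Sum.inl ())) = (1, p.2) := by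
      have hb : b (Sum.inl ()) = ((1:ℝ), (0 : EuclideanSpace ℝ (Fin d))) := by
        apply Prod.ext
        · rw [Module.Basis.prod_apply_inl_fst]; simp [b1]
        · exact Module.Basis.prod_apply_inl_snd _ _ _
      rw [hb]; simp [DPhi]
    have hval_inr : ∀ j, (DPhi d p) (b (Sum.inr j)) = (0, p.1 • (b2 j)) := by
      intro j
      have hb : b (Sum.inr j) = ((0:ℝ), b2 j) := by
        apply Prod.ext
        · exact Module.Basis.prod_apply_inr_fst _ _ _
        · exact Module.Basis.prod_apply_inr_snd _ _ _
      rw [hb]; simp [DPhi]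
    ext i j
    rw [LinearMap.toMatrix_apply]
    rcases i with i | i <;> rcases j with j | j
    · rw [ContinuousLinearMap.coe_coe, show j = () from rfl, hval_inl, Module.Basis.prod_repr_inl]
      simp [b1, Matrix.fromBlocks]
    · rw [ContinuousLinearMap.coe_coe, hval_inr j, Module.Basis.prod_repr_inl]
      simp [b1, Matrix.fromBlocks]
    · rw [ContinuousLinearMap.coe_coe, show j = () from rfl, hval_inl, Module.Basis.prod_repr_inr]
      simp [b2, PiLp.basisFun_repr, Matrix.fromBlocks]
    · rw [ContinuousLinearMap.coe_coe, hval_inr j, Module.Basis.prod_repr_inr]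
      rw [LinearEquiv.map_smul, Finsupp.smul_apply, Module.Basis.repr_self, Finsupp.single_apply]
      simp [Matrix.fromBlocks, Matrix.one_apply, eq_comm]
  rw [hM, Matrix.det_fromBlocks_zero₁₂]
  simp [Matrix.det_smul]

lemma injOn_Phi : InjOn (fun q : ℝ × EuclideanSpace ℝ (Fin d) => (q.1, q.1 • q.2))
    (Ioi (0:ℝ) ×ˢ Metric.closedBall 0 1) := by
  rintro ⟨t, y⟩ ht ⟨t', y'⟩ ht' h
  simp only [Prod.mk.injEq] at h
  obtain ⟨h1, h2⟩ := h
  subst h1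
  have htpos : (0:ℝ) < t := ht.1
  refine Prod.ext rfl ?_
  exact smul_right_injective _ (ne_of_gt htpos) h2

lemma image_Phi : (fun q : ℝ × EuclideanSpace ℝ (Fin d) => (q.1, q.1 • q.2)) ''
    (Ioi (0:ℝ) ×ˢ Metric.closedBall 0 1)
    = {p : ℝ × EuclideanSpace ℝ (Fin d) | 0 < p.1 ∧ ‖p.2‖ ≤ p.1} := by
  ext ⟨t, x⟩
  constructor
  · rintro ⟨⟨s, y⟩, ⟨hs, hy⟩, h⟩
    obtain ⟨h1, h2⟩ := Prod.mk.injEq .. ▸ h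
    subst h1; subst h2
    have hs' : (0:ℝ) < s := hs
    refine ⟨hs', ?_⟩
    rw [norm_smul, Real.norm_eq_abs, abs_of_pos hs']
    have hy' : ‖y‖ ≤ 1 := mem_closedBall_zero_iff.mp hy
    nlinarith
  · rintro ⟨ht, hx⟩
    refine ⟨(t, t⁻¹ • x), ⟨ht, ?_⟩, ?_⟩
    · rw [mem_closedBall_zero_iff, norm_smul, Real.norm_eq_abs, abs_of_pos (inv_pos.mpr ht)]
      rw [inv_mul_le_iff₀ ht, mul_one]
      exact hx
    · simp only [smul_smul, mul_inv_cancel₀ (ne_of_gt ht), one_smul]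

lemma cone_ae_image : {p : ℝ × EuclideanSpace ℝ (Fin d) | ‖p.2‖ ≤ p.1 ∧ 0 ≤ p.1}
    =ᵐ[volume] {p : ℝ × EuclideanSpace ℝ (Fin d) | 0 < p.1 ∧ ‖p.2‖ ≤ p.1} := by
  rw [MeasureTheory.ae_eq_set]
  have hnull : volume (({0} : Set ℝ) ×ˢ (univ : Set (EuclideanSpace ℝ (Fin d)))) = 0 := by
    rw [MeasureTheory.Measure.volume_eq_prod, MeasureTheory.Measure.prod_prod]
    simp
  constructor
  · apply measure_mono_null ?_ hnull
    rintro ⟨t, x⟩ ⟨⟨h1, h2⟩, h3⟩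
    simp only [mem_setOf_eq, not_and, not_le] at h3
    have : t = 0 := by
      by_contra hne
      have : 0 < t := lt_of_le_of_ne h2 (Ne.symm hne)
      exact absurd (h3 this) (not_lt.mpr h1)
    exact ⟨by simp [this], mem_univ _⟩
  · apply measure_mono_null ?_ (measure_empty (μ := volume))
    rintro ⟨t, x⟩ ⟨⟨h1, h2⟩, h3⟩
    exact absurd ⟨h2, le_of_lt h1⟩ h3

instance (d : ℕ) : MeasureTheory.Measure.IsAddHaarMeasure
    (volume : MeasureTheory.Measure (ℝ × EuclideanSpace ℝ (Fin d))) :=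
  MeasureTheory.Measure.prod.instIsAddHaarMeasure _ _

end aux

/-- orthogonality of the Laguerre polynomials on the cone
`L_{k,n}^{β,μ}(t,x) = L_{n-m}^{2m+2μ+β+d-1}(t) t^m P(x/t)`, where `P, P'` are
orthogonal-basis elements of `V_m(B^d, w_μ)`, `V_{m'}(B^d, w_μ)` respectively. -/
theorem laguerre_cone_orthogonality (d : ℕ) (μ β : ℝ) (hμ : -1/2 < μ)
    (hβ : -(d : ℝ) < β) (n n' m m' : ℕ) (hm : m ≤ n) (hm' : m' ≤ n')
    (P P' : MvPolynomial (Fin d) ℝ)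
    (hPdeg : P.totalDegree = m) (hP'deg : P'.totalDegree = m')
    (hPorth : ∀ R : MvPolynomial (Fin d) ℝ, R.totalDegree < m →
      ∫ y in Metric.closedBall (0 : EuclideanSpace ℝ (Fin d)) 1,
        MvPolynomial.eval (fun j => y j) P * MvPolynomial.eval (fun j => y j) R *
          (1 - ‖y‖ ^ 2) ^ (μ - 1/2) = 0)
    (hP'orth : ∀ R : MvPolynomial (Fin d) ℝ, R.totalDegree < m' →
      ∫ y in Metric.closedBall (0 : EuclideanSpace ℝ (Fin d)) 1,
        MvPolynomial.eval (fun j => y j) P' * MvPolynomial.eval (fun j => y j) R *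
          (1 - ‖y‖ ^ 2) ^ (μ - 1/2) = 0)
    (hmut : m = m' → P ≠ P' →
      ∫ y in Metric.closedBall (0 : EuclideanSpace ℝ (Fin d)) 1,
        MvPolynomial.eval (fun j => y j) P * MvPolynomial.eval (fun j => y j) P' *
          (1 - ‖y‖ ^ 2) ^ (μ - 1/2) = 0)
    (hne : ¬(n = n' ∧ m = m' ∧ P = P')) :
    ∫ p in coneSet d,
        (lagR (n - m) (2 * m + 2 * μ + β + d - 1) p.1 * p.1 ^ m *
          MvPolynomial.eval (fun j => p.2 j / p.1) P) *
        (lagR (n' - m') (2 * m' + 2 * μ + β + d - 1) p.1 * p.1 ^ m' *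
          MvPolynomial.eval (fun j => p.2 j / p.1) P') *
        ((p.1 ^ 2 - ‖p.2‖ ^ 2) ^ (μ - 1/2) * p.1 ^ β * Real.exp (-p.1)) = 0 := by
  classical
  set G : ℝ → ℝ := fun t => lagR (n-m) (2 * m + 2 * μ + β + d - 1) t
      * lagR (n'-m') (2 * m' + 2 * μ + β + d - 1) t
      * t ^ (m + m' + d) * (t^2) ^ (μ - 1/2) * t ^ β * Real.exp (-t) with hG
  set H : EuclideanSpace ℝ (Fin d) → ℝ := fun y =>
      MvPolynomial.eval (fun j => y j) P * MvPolynomial.eval (fun j => y j) P'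
        * (1 - ‖y‖ ^ 2) ^ (μ - 1/2) with hH
  set F : ℝ × EuclideanSpace ℝ (Fin d) → ℝ := fun p =>
    (lagR (n - m) (2 * m + 2 * μ + β + d - 1) p.1 * p.1 ^ m *
          MvPolynomial.eval (fun j => p.2 j / p.1) P) *
        (lagR (n' - m') (2 * m' + 2 * μ + β + d - 1) p.1 * p.1 ^ m' *
          MvPolynomial.eval (fun j => p.2 j / p.1) P') *
        ((p.1 ^ 2 - ‖p.2‖ ^ 2) ^ (μ - 1/2) * p.1 ^ β * Real.exp (-p.1)) with hF
  show ∫ p in coneSet d, F p = 0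
  have key : ∫ p in coneSet d, F p
      = (∫ t in Ioi (0:ℝ), G t) * (∫ y in Metric.closedBall (0:EuclideanSpace ℝ (Fin d)) 1, H y) := by
    have h1 : ∫ p in coneSet d, F p
        = ∫ p in {p : ℝ × EuclideanSpace ℝ (Fin d) | 0 < p.1 ∧ ‖p.2‖ ≤ p.1}, F p :=
      setIntegral_congr_set cone_ae_image
    rw [h1, ← image_Phi]
    rw [integral_image_eq_integral_abs_det_fderiv_smul volume
      (measurableSet_Ioi.prod measurableSet_closedBall)
      (fun q _ => (hasFDerivAt_Phi q).hasFDerivWithinAt) injOn_Phi F]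
    have h2 : ∀ q ∈ (Ioi (0:ℝ) ×ˢ Metric.closedBall (0 : EuclideanSpace ℝ (Fin d)) 1),
        |(DPhi d q).det| • F (q.1, q.1 • q.2) = G q.1 * H q.2 := by
      rintro ⟨t, y⟩ ⟨ht, hy⟩
      have htp : (0:ℝ) < t := ht
      have hy1 : ‖y‖ ≤ 1 := mem_closedBall_zero_iff.mp hy
      rw [det_DPhi]
      simp only [smul_eq_mul]
      have heval : (fun j => (t • y) j / t) = fun j : Fin d => y j := by
        funext j
        rw [PiLp.smul_apply, smul_eq_mul]
        field_simp
      have hnorm : ‖t • y‖ ^ 2 = t^2 * ‖y‖^2 := by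
        rw [norm_smul, Real.norm_eq_abs, mul_pow, sq_abs]
      have hsplit : (t^2 - ‖t • y‖^2) ^ (μ - 1/2)
          = (t^2) ^ (μ-1/2) * (1 - ‖y‖^2) ^ (μ-1/2) := by
        rw [hnorm, show t^2 - t^2*‖y‖^2 = t^2 * (1-‖y‖^2) by ring,
          Real.mul_rpow (sq_nonneg t) (by nlinarith [norm_nonneg y, sq_nonneg (1 - ‖y‖)])]
      simp only [hF, hG, hH, heval]
      rw [hsplit]
      rw [abs_of_pos (pow_pos htp d)]
      ring
    rw [setIntegral_congr_fun (measurableSet_Ioi.prod measurableSet_closedBall) h2]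
    rw [MeasureTheory.Measure.volume_eq_prod]
    exact setIntegral_prod_mul G H _ _
  rw [key]
  rcases Nat.lt_trichotomy m m' with hmm | hmm | hmm
  · have hB : ∫ y in Metric.closedBall (0:EuclideanSpace ℝ (Fin d)) 1, H y = 0 := by
      have h := hP'orth P (by rw [hPdeg]; exact hmm)
      rw [← h]
      apply setIntegral_congr_fun measurableSet_closedBall
      intro y _; simp only [hH]; ring
    rw [hB, mul_zero]
  · subst hmm
    by_cases hPP : P = P'
    · subst hPP
      have hnn : n ≠ n' := fun h => hne ⟨h, rfl, rfl⟩
      have hT : ∫ t in Ioi (0:ℝ), G t = 0 := by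
        have hcong : ∀ t ∈ Ioi (0:ℝ), G t
            = lagR (n-m) (2 * m + 2 * μ + β + d - 1) t * lagR (n'-m) (2 * m + 2 * μ + β + d - 1) t
              * t ^ ((2 * m + 2 * μ + β + d - 1 : ℝ)) * Real.exp (-t) := by
          intro t ht
          have htp : (0:ℝ) < t := ht
          simp only [hG]
          have hpow : (t:ℝ) ^ (m + m + d) * (t^2) ^ (μ - 1/2) * t ^ β
              = t ^ ((2 * m + 2 * μ + β + d - 1 : ℝ)) := by
            rw [← Real.rpow_natCast t (m+m+d), ← Real.rpow_natCast t 2,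
              ← Real.rpow_mul htp.le, ← Real.rpow_add htp, ← Real.rpow_add htp]
            congr 1
            push_cast
            ring
          rw [← hpow]
          ring
        rw [setIntegral_congr_fun measurableSet_Ioi hcong]
        apply lag_orth_full
        · have h0 : (0:ℝ) ≤ (m:ℝ) := Nat.cast_nonneg m
          linarith
        · omega
      rw [hT, zero_mul]
    · have hB : ∫ y in Metric.closedBall (0:EuclideanSpace ℝ (Fin d)) 1, H y = 0 := hmut rfl hPP
      rw [hB, mul_zero]
  · have hB : ∫ y in Metric.closedBall (0:EuclideanSpace ℝ (Fin d)) 1, H y = 0 := by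
      have h := hPorth P' (by rw [hP'deg]; exact hmm)
      exact h
    rw [hB, mul_zero]
end
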